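/- arXiv:2603.12006 — 2 statements merged into one kernel-verified Lean document; each statement's English description precedes it below -/
import Mathlib

section
/- There exists a constant c > 0 such that for every n and all x,y,z ∈ V_{SG_n} with x ∼_n y, the Green function satisfies |g_n(x,z) − g_n(y,z)| ≤ c (a uniform bound over all levels n, reflecting the Hölder continuity of the limiting Green function on the gasket). -/
open scoped Classical BigOperators ENNReal

noncomputable section

/-- Points of the plane. -/
abbrev Pt : Type := ℝ × ℝ

/-- Bottom-left corner `A`. -/
def u1 : Pt := (0, 0)
/-- Top corner `C`. -/
def u2 : Pt := (1/2, Real.sqrt 3 / 2)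
/-- Bottom-right corner `B`. -/
def u3 : Pt := (1, 0)

/-- The three corners of the gasket. -/
def corners : Set Pt := {u1, u2, u3}

/-- Vertex set of the `n`-th Sierpinski gasket approximation graph `SG_n`. -/
def V : ℕ → Set Pt
  | 0 => {u1, u2, u3}
  | n + 1 =>
      (fun p : Pt => (2:ℝ)⁻¹ • p) ''
        (V n ∪ (fun p => u2 + p) '' V n ∪ (fun p => u3 + p) '' V n)

/-- Edge set (as ordered pairs) of `SG_n`. -/
def Ed : ℕ → Set (Pt × Pt)
  | 0 => {(u1, u2), (u2, u3), (u1, u3)}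
  | n + 1 =>
      (fun q : Pt × Pt => ((2:ℝ)⁻¹ • q.1, (2:ℝ)⁻¹ • q.2)) ''
        (Ed n ∪ (fun q : Pt × Pt => (u2 + q.1, u2 + q.2)) '' Ed n ∪
          (fun q : Pt × Pt => (u3 + q.1, u3 + q.2)) '' Ed n)

/-- The `n`-th Sierpinski gasket approximation graph, as a simple graph on the plane
(vertices outside `V n` are isolated). -/
def SG (n : ℕ) : SimpleGraph Pt where
  Adj x y := ((x, y) ∈ Ed n ∨ (y, x) ∈ Ed n) ∧ x ≠ y
  symm := ⟨fun x y h => ⟨h.1.symm, h.2.symm⟩⟩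
  loopless := ⟨fun _ h => h.2 rfl⟩

/-- Graph distance on `SG_n`. -/
def gdist (n : ℕ) (x y : Pt) : ℕ := (SG n).dist x y

/-- `d_n x`: graph distance from `x` to the nearest corner of `SG_n`. -/
def dcorner (n : ℕ) (x : Pt) : ℕ :=
  min (gdist n x u1) (min (gdist n x u2) (gdist n x u3))

/-- Graph Laplacian of `SG_n` at a (non-corner, degree 4) vertex `x`:
`Δ_n f x = 4 f x - ∑_{y ∼ x} f y`. -/
def lap (n : ℕ) (f : Pt → ℝ) (x : Pt) : ℝ :=
  4 * f x - ∑ᶠ (y : Pt) (_ : (SG n).Adj x y), f y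

/-- `g : Pt → Pt → ℝ` is the Green function of `SG_n` (stopped at the corners):
it vanishes whenever one argument is a corner, and for every non-corner vertex `y`
the function `x ↦ g x y` has Laplacian `δ_y` at every non-corner vertex `x`. -/
def IsGreen (n : ℕ) (g : Pt → Pt → ℝ) : Prop :=
  (∀ x y : Pt, x ∈ corners ∨ y ∈ corners → g x y = 0) ∧
    ∀ y ∈ V n, y ∉ corners → ∀ x ∈ V n, x ∉ corners →
      lap n (fun z => g z y) x = if x = y then 1 else 0

/-- `h_n x = ∑_{y ∈ V_{SG_n}} g_n(x,y)`. -/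
def hfun (n : ℕ) (g : Pt → Pt → ℝ) (x : Pt) : ℝ := ∑ᶠ y ∈ V n, g x y

/-- Green convolution `(g_n * σ)(x) = ∑_{y ∈ V_{SG_n}} g_n(x,y) σ(y)`. -/
def conv (n : ℕ) (g : Pt → Pt → ℝ) (σ : Pt → ℕ) (x : Pt) : ℝ :=
  ∑ᶠ y ∈ V n, g x y * (σ y : ℝ)

/-- Midpoint of side `AB`. -/
def mAB : Pt := (2:ℝ)⁻¹ • (u1 + u3)
/-- Midpoint of side `BC`. -/
def mBC : Pt := (2:ℝ)⁻¹ • (u3 + u2)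
/-- Midpoint of side `CA`. -/
def mCA : Pt := (2:ℝ)⁻¹ • (u2 + u1)

/-- The recursively defined sandpile configurations `M_n(a,b,c)` on `SG_n`
(value `0` off the vertex set, and junk at level `0`). -/
def M : ℕ → ℕ → ℕ → ℕ → Pt → ℕ
  | 0, _, _, _, _ => 0
  | 1, a, b, c, x =>
      if x = u1 then a else if x = u3 then b else if x = u2 then c
      else if x = mAB then 3 else if x = mBC then 2 else if x = mCA then 3 else 0
  | n + 2, a, b, c, x =>
      if x = u1 then a else if x = u3 then b else if x = u2 then c
      else if x = mAB then 3 else if x = mBC then 2 else if x = mCA then 3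
      else if (2:ℝ) • x ∈ V (n+1) then M (n+1) a 3 3 ((2:ℝ) • x)
      else if (2:ℝ) • x - u3 ∈ V (n+1) then M (n+1) 3 b 2 ((2:ℝ) • x - u3)
      else if (2:ℝ) • x - u2 ∈ V (n+1) then M (n+1) 3 2 c ((2:ℝ) • x - u2)
      else 0

/-- Centroid of the three corners. -/
def ctr : Pt := (3:ℝ)⁻¹ • (u1 + u2 + u3)

/-- Rotation of the plane by 120° counterclockwise about the centroid. -/
def rotccw (x : Pt) : Pt :=
  (ctr.1 - (x.1 - ctr.1) / 2 - Real.sqrt 3 / 2 * (x.2 - ctr.2),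
   ctr.2 + Real.sqrt 3 / 2 * (x.1 - ctr.1) - (x.2 - ctr.2) / 2)

/-- Rotation of the plane by 120° clockwise about the centroid. -/
def rotcw (x : Pt) : Pt :=
  (ctr.1 - (x.1 - ctr.1) / 2 + Real.sqrt 3 / 2 * (x.2 - ctr.2),
   ctr.2 - Real.sqrt 3 / 2 * (x.1 - ctr.1) - (x.2 - ctr.2) / 2)

/-- The sandpile identity `id_n` on `SG_n` for `n ≥ 2` (junk `0` for `n ≤ 1` and off the
vertex set): value `2` at the corners and side midpoints, the configuration `M_{n-1}(2,2,2)`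
rescaled on the bottom-left copy, its clockwise 120° rotation on the top copy, and its
counterclockwise 120° rotation on the bottom-right copy. -/
def sandId : ℕ → Pt → ℕ
  | 0, _ => 0
  | 1, _ => 0
  | m + 2, x =>
      if x = u1 ∨ x = u2 ∨ x = u3 ∨ x = mAB ∨ x = mBC ∨ x = mCA then 2
      else if (2:ℝ) • x ∈ V (m+1) then M (m+1) 2 2 2 ((2:ℝ) • x)
      else if (2:ℝ) • x - u2 ∈ V (m+1) then M (m+1) 2 2 2 (rotccw ((2:ℝ) • x - u2))
      else if (2:ℝ) • x - u3 ∈ V (m+1) then M (m+1) 2 2 2 (rotcw ((2:ℝ) • x - u3))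
      else 0

/-- `V_* = ⋃_n V_{SG_n}`. -/
def Vstar : Set Pt := ⋃ n, V n

/-- The Sierpinski gasket: the closure of `V_*` in the plane. -/
def SGset : Set Pt := closure Vstar

/-- Euclidean distance on the plane. -/
def eud (x y : Pt) : ℝ := Real.sqrt ((x.1 - y.1) ^ 2 + (x.2 - y.2) ^ 2)

/-- The point of `V n` nearest to `x` in Euclidean distance, ties resolved by taking the
rightmost (largest first coordinate) minimizer. -/
def nearest (n : ℕ) (x : Pt) : Pt :=
  if h : ∃ y ∈ V n, (∀ z ∈ V n, eud x y ≤ eud x z) ∧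
      ∀ z ∈ V n, eud x z = eud x y → z.1 ≤ y.1
  then h.choose else x

/-- Piecewise constant continuation `f^▲` of a function on `V n` to the gasket. -/
def ext (n : ℕ) (f : Pt → ℝ) (x : Pt) : ℝ := f (nearest n x)

/-- Arc length (total variation w.r.t. the Euclidean distance) of a curve
`γ : [0,1] → ℝ²`. -/
def pathLen (γ : ℝ → Pt) : ℝ≥0∞ :=
  ⨆ p : ℕ × {u : ℕ → ℝ // Monotone u ∧ ∀ i, u i ∈ Set.Icc (0:ℝ) 1},
    ∑ i ∈ Finset.range p.1, ENNReal.ofReal (eud (γ (p.2.1 (i + 1))) (γ (p.2.1 i)))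

/-- Intrinsic (shortest-path) distance between `x` and `y` through the gasket. -/
def intrinsicD (x y : Pt) : ℝ≥0∞ :=
  ⨅ (γ : ℝ → Pt) (_ : ContinuousOn γ (Set.Icc 0 1)) (_ : γ 0 = x) (_ : γ 1 = y)
    (_ : Set.MapsTo γ (Set.Icc 0 1) SGset), pathLen γ

/-- `d(x)`: intrinsic shortest-path distance in the gasket from `x` to the nearest corner. -/
def dSG (x : Pt) : ℝ :=
  (min (intrinsicD x u1) (min (intrinsicD x u2) (intrinsicD x u3))).toReal

/-!
The bound holds with `c = 1`. Fix a non-corner vertex `z` and write `u = g_n(·, z)`. Summing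
`Δ_n u = δ_z` over a finite set `A` of non-corner vertices gives at most `1`. On the other hand
`Δ_n u(a) = (4 - deg a) u(a) + ∑_{w ∼ a} (u(a) - u(w))`, the terms along edges inside `A`
cancel, and all degrees are at most `4`; so if `u ≥ 0` on `A`, the sum is at least the flux
`∑ (u(a) - u(w))` over the edges leaving `A`. For a superlevel set `A = {u > t}` with `t ≥ 0`
every leaving edge contributes nonnegatively, hence an edge `x ∼ y` with `u(y) ≤ t < u(x)` has
`u(x) - u(y) ≤ 1`. The same flux inequality for `-u` on `{u < 0}`, together with the
connectivity of `SG_n`, shows `u ≥ 0`, so that one may take `t = u(y)`.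
-/

namespace SimpleGraph

variable {α : Type*} (G : SimpleGraph α) [G.LocallyFinite]

theorem sum_sum_neighborFinset_sub_eq_sum_boundary (A : Finset α) (u : α → ℝ) :
    ∑ a ∈ A, ∑ w ∈ G.neighborFinset a, (u a - u w) =
      ∑ a ∈ A, ∑ w ∈ G.neighborFinset a with w ∉ A, (u a - u w) := by
  have interior : ∑ a ∈ A, ∑ w ∈ G.neighborFinset a with w ∈ A, (u a - u w) = 0 := by
    have hfilter : ∀ a, {w ∈ G.neighborFinset a | w ∈ A} = {w ∈ A | G.Adj a w} := by
      intro a; ext w; simp [and_comm]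
    simp_rw [hfilter, Finset.sum_filter]
    have hswap : ∑ a ∈ A, ∑ w ∈ A, (if G.Adj a w then u a - u w else 0) =
        ∑ a ∈ A, ∑ w ∈ A, (if G.Adj a w then u w - u a else 0) := by
      rw [Finset.sum_comm]; simp_rw [G.adj_comm]
    have hneg : ∑ a ∈ A, ∑ w ∈ A, (if G.Adj a w then u w - u a else 0) =
        -∑ a ∈ A, ∑ w ∈ A, (if G.Adj a w then u a - u w else 0) := by
      simp only [← Finset.sum_neg_distrib]
      exact Finset.sum_congr rfl fun a _ => Finset.sum_congr rfl fun w _ => by split_ifs <;> ring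
    linarith
  simp_rw [← Finset.sum_filter_add_sum_filter_not (G.neighborFinset _) (· ∈ A),
    Finset.sum_add_distrib, interior, zero_add]

theorem sub_le_sum_laplacian_of_boundary_le (d : ℕ) (A : Finset α) (u : α → ℝ)
    (hdeg : ∀ a ∈ A, G.degree a ≤ d) (hnonneg : ∀ a ∈ A, 0 ≤ u a)
    (hout : ∀ a ∈ A, ∀ w, G.Adj a w → w ∉ A → u w ≤ u a)
    {x y : α} (hx : x ∈ A) (hy : y ∉ A) (hxy : G.Adj x y) :
    u x - u y ≤ ∑ a ∈ A, (d * u a - ∑ w ∈ G.neighborFinset a, u w) := by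
  have hsplit : ∀ a, d * u a - ∑ w ∈ G.neighborFinset a, u w =
      (d - G.degree a) * u a + ∑ w ∈ G.neighborFinset a, (u a - u w) := by
    intro a
    rw [Finset.sum_sub_distrib, Finset.sum_const, card_neighborFinset_eq_degree, nsmul_eq_mul]
    ring
  have hboundary : ∀ a ∈ A, ∀ w ∈ {w ∈ G.neighborFinset a | w ∉ A}, 0 ≤ u a - u w := by
    intro a ha w hw
    rw [Finset.mem_filter, mem_neighborFinset] at hw
    linarith [hout a ha w hw.1 hw.2]
  have hdegree_term : 0 ≤ ∑ a ∈ A, ((d : ℝ) - G.degree a) * u a :=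
    Finset.sum_nonneg fun a ha =>
      mul_nonneg (sub_nonneg.2 (by exact_mod_cast hdeg a ha)) (hnonneg a ha)
  have hy_mem : y ∈ {w ∈ G.neighborFinset x | w ∉ A} := by simp [hxy, hy]
  calc u x - u y ≤ ∑ w ∈ G.neighborFinset x with w ∉ A, (u x - u w) :=
        Finset.single_le_sum (hboundary x hx) hy_mem
    _ ≤ ∑ a ∈ A, ∑ w ∈ G.neighborFinset a with w ∉ A, (u a - u w) :=
        Finset.single_le_sum (fun a ha => Finset.sum_nonneg (hboundary a ha)) hx
    _ ≤ ∑ a ∈ A, (d * u a - ∑ w ∈ G.neighborFinset a, u w) := by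
        simp_rw [hsplit, Finset.sum_add_distrib, sum_sum_neighborFinset_sub_eq_sum_boundary]
        linarith

end SimpleGraph

-- The contractions `F_i p = (u_i + p) / 2` of the gasket (recall `u1 = 0`).
def F1 (p : Pt) : Pt := (2:ℝ)⁻¹ • p
def F2 (p : Pt) : Pt := (2:ℝ)⁻¹ • (u2 + p)
def F3 (p : Pt) : Pt := (2:ℝ)⁻¹ • (u3 + p)

def F1inv (x : Pt) : Pt := (2:ℝ) • x
def F2inv (x : Pt) : Pt := (2:ℝ) • x - u2
def F3inv (x : Pt) : Pt := (2:ℝ) • x - u3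

lemma F1inv_F1 (p : Pt) : F1inv (F1 p) = p := smul_inv_smul₀ two_ne_zero p
lemma F2inv_F2 (p : Pt) : F2inv (F2 p) = p := by simp [F2inv, F2]
lemma F3inv_F3 (p : Pt) : F3inv (F3 p) = p := by simp [F3inv, F3]

lemma V_succ (n : ℕ) : V (n + 1) = F1 '' V n ∪ F2 '' V n ∪ F3 '' V n := by
  rw [V, Set.image_union, Set.image_union, Set.image_image, Set.image_image]
  rfl

lemma Ed_succ (n : ℕ) :
    Ed (n + 1) = Prod.map F1 F1 '' Ed n ∪ Prod.map F2 F2 '' Ed n ∪ Prod.map F3 F3 '' Ed n := by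
  rw [Ed, Set.image_union, Set.image_union, Set.image_image, Set.image_image]
  rfl

lemma V_finite (n : ℕ) : (V n).Finite := by
  induction n with
  | zero => exact (Set.toFinite {u3}).insert u2 |>.insert u1
  | succ n ih => rw [V_succ]; exact ((ih.image _).union (ih.image _)).union (ih.image _)

lemma corners_subset_V (n : ℕ) : corners ⊆ V n := by
  induction n with
  | zero => exact subset_rfl
  | succ n ih =>
    rintro c (rfl | rfl | rfl) <;> rw [V_succ]
    · exact Or.inl (Or.inl ⟨u1, ih (Or.inl rfl), by simp [F1, u1]⟩)
    · exact Or.inl (Or.inr ⟨u2, ih (Or.inr (Or.inl rfl)), by simp [F2, ← two_smul ℝ u2]⟩)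
    · exact Or.inr ⟨u3, ih (Or.inr (Or.inr rfl)), by simp [F3, ← two_smul ℝ u3]⟩

lemma Ed_subset_V (n : ℕ) : ∀ e ∈ Ed n, e.1 ∈ V n ∧ e.2 ∈ V n := by
  induction n with
  | zero => rintro e (rfl | rfl | rfl) <;> simp [V]
  | succ n ih =>
    rw [Ed_succ, V_succ]
    rintro _ ((⟨e, he, rfl⟩ | ⟨e, he, rfl⟩) | ⟨e, he, rfl⟩)
    · exact ⟨Or.inl (Or.inl ⟨_, (ih e he).1, rfl⟩), Or.inl (Or.inl ⟨_, (ih e he).2, rfl⟩)⟩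
    · exact ⟨Or.inl (Or.inr ⟨_, (ih e he).1, rfl⟩), Or.inl (Or.inr ⟨_, (ih e he).2, rfl⟩)⟩
    · exact ⟨Or.inr ⟨_, (ih e he).1, rfl⟩, Or.inr ⟨_, (ih e he).2, rfl⟩⟩

lemma SG_adj_mem_V {n : ℕ} {x y : Pt} (h : (SG n).Adj x y) : x ∈ V n ∧ y ∈ V n := by
  rcases h.1 with h | h
  · exact Ed_subset_V n _ h
  · exact (Ed_subset_V n _ h).symm

lemma SG_neighborSet_subset_V (n : ℕ) (x : Pt) : (SG n).neighborSet x ⊆ V n :=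
  fun _ hy => (SG_adj_mem_V hy).2

instance SG_locallyFinite (n : ℕ) : (SG n).LocallyFinite :=
  fun x => ((V_finite n).subset (SG_neighborSet_subset_V n x)).fintype

lemma SG_degree_eq_ncard (n : ℕ) (x : Pt) :
    (SG n).degree x = ((SG n).neighborSet x).ncard :=
  (Set.ncard_eq_toFinset_card' _).symm

lemma SG_degree_eq_zero_of_notMem {n : ℕ} {x : Pt} (hx : x ∉ V n) : (SG n).degree x = 0 := by
  rw [SG_degree_eq_ncard, Set.ncard_eq_zero]
  exact Set.eq_empty_of_forall_notMem fun _ hy => hx (SG_adj_mem_V hy).1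

lemma SG_adj_succ {n : ℕ} {x y : Pt} (h : (SG (n + 1)).Adj x y) :
    ∃ p q, (SG n).Adj p q ∧
      (x = F1 p ∧ y = F1 q ∨ x = F2 p ∧ y = F2 q ∨ x = F3 p ∧ y = F3 q) := by
  obtain ⟨hE, hne⟩ := h
  rw [Ed_succ] at hE
  rcases hE with ((⟨⟨p, q⟩, he, hpq⟩ | ⟨⟨p, q⟩, he, hpq⟩) | ⟨⟨p, q⟩, he, hpq⟩) |
    ((⟨⟨p, q⟩, he, hpq⟩ | ⟨⟨p, q⟩, he, hpq⟩) | ⟨⟨p, q⟩, he, hpq⟩) <;>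
    simp only [Prod.map, Prod.mk.injEq] at hpq <;> obtain ⟨rfl, rfl⟩ := hpq
  all_goals first
    | exact ⟨p, q, ⟨Or.inl he, fun h => hne (h ▸ rfl)⟩, by simp⟩
    | exact ⟨q, p, ⟨Or.inr he, fun h => hne (h ▸ rfl)⟩, by simp⟩

lemma SG_neighborSet_succ_subset (n : ℕ) (x : Pt) :
    (SG (n + 1)).neighborSet x ⊆ F1 '' (SG n).neighborSet (F1inv x) ∪
      F2 '' (SG n).neighborSet (F2inv x) ∪ F3 '' (SG n).neighborSet (F3inv x) := by
  intro y hy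
  obtain ⟨p, q, hpq, (⟨rfl, rfl⟩ | ⟨rfl, rfl⟩ | ⟨rfl, rfl⟩)⟩ := SG_adj_succ hy
  · exact Or.inl (Or.inl ⟨q, by rwa [F1inv_F1], rfl⟩)
  · exact Or.inl (Or.inr ⟨q, by rwa [F2inv_F2], rfl⟩)
  · exact Or.inr ⟨q, by rwa [F3inv_F3], rfl⟩

lemma SG_degree_succ_le (n : ℕ) (x : Pt) :
    (SG (n + 1)).degree x ≤
      (SG n).degree (F1inv x) + (SG n).degree (F2inv x) + (SG n).degree (F3inv x) := by
  simp only [SG_degree_eq_ncard]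
  refine (Set.ncard_le_ncard (SG_neighborSet_succ_subset n x)
    (((Set.toFinite _).union (Set.toFinite _)).union (Set.toFinite _))).trans ?_
  refine (Set.ncard_union_le _ _).trans (add_le_add ((Set.ncard_union_le _ _).trans
    (add_le_add ?_ ?_)) ?_) <;> exact Set.ncard_image_le (Set.toFinite _)

lemma SG_adj_succ_of_adj {n : ℕ} {φ : Pt → Pt} (hφ : φ.Injective)
    (hEd : Prod.map φ φ '' Ed n ⊆ Ed (n + 1)) {p q : Pt} (h : (SG n).Adj p q) :
    (SG (n + 1)).Adj (φ p) (φ q) :=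
  ⟨h.1.imp (fun he => hEd ⟨_, he, rfl⟩) (fun he => hEd ⟨_, he, rfl⟩), hφ.ne h.2⟩

def F1Hom (n : ℕ) : SG n →g SG (n + 1) :=
  ⟨F1, SG_adj_succ_of_adj (Function.LeftInverse.injective F1inv_F1)
    (by rw [Ed_succ]; exact fun _ he => Or.inl (Or.inl he))⟩

def F2Hom (n : ℕ) : SG n →g SG (n + 1) :=
  ⟨F2, SG_adj_succ_of_adj (Function.LeftInverse.injective F2inv_F2)
    (by rw [Ed_succ]; exact fun _ he => Or.inl (Or.inr he))⟩

def F3Hom (n : ℕ) : SG n →g SG (n + 1) :=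
  ⟨F3, SG_adj_succ_of_adj (Function.LeftInverse.injective F3inv_F3)
    (by rw [Ed_succ]; exact fun _ he => Or.inr he)⟩

lemma u1_ne_u2 : u1 ≠ u2 := by simp [u1, u2]
lemma u1_ne_u3 : u1 ≠ u3 := by simp [u1, u3]
lemma u2_ne_u3 : u2 ≠ u3 := by simp [u2, u3]

lemma SG_reachable_u1 (n : ℕ) : ∀ x ∈ V n, (SG n).Reachable x u1 := by
  induction n with
  | zero =>
    rintro x (rfl | rfl | rfl)
    · rfl
    · exact SimpleGraph.Adj.reachable ⟨Or.inr (Or.inl rfl), u1_ne_u2.symm⟩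
    · exact SimpleGraph.Adj.reachable ⟨Or.inr (Or.inr (Or.inr rfl)), u1_ne_u3.symm⟩
  | succ n ih =>
    have hF1 : F1 u1 = u1 := by simp [F1, u1]
    have hu1 : ∀ c ∈ corners, (SG (n + 1)).Reachable (F1 c) u1 :=
      fun c hc => hF1 ▸ (ih c (corners_subset_V n hc)).map (F1Hom n)
    rw [V_succ]
    rintro _ ((⟨p, hp, rfl⟩ | ⟨p, hp, rfl⟩) | ⟨p, hp, rfl⟩)
    · exact hF1 ▸ (ih p hp).map (F1Hom n)
    · have hjoin : F2Hom n u1 = F1 u2 := by simp [F2Hom, F1, F2, u1]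
      exact ((ih p hp).map (F2Hom n)).trans (hjoin ▸ hu1 u2 (Or.inr (Or.inl rfl)))
    · have hjoin : F3Hom n u1 = F1 u3 := by simp [F3Hom, F1, F3, u1]
      exact ((ih p hp).map (F3Hom n)).trans (hjoin ▸ hu1 u3 (Or.inr (Or.inr rfl)))

def Tri : Set Pt := {p | 0 ≤ p.2 ∧ p.2 ≤ √3 * p.1 ∧ p.2 ≤ √3 * (1 - p.1)}

lemma V_subset_Tri (n : ℕ) : V n ⊆ Tri := by
  have hs : 0 < √3 := by positivity
  induction n with
  | zero =>
    rintro _ (rfl | rfl | rfl) <;> simp only [Tri, u1, u2, u3, Set.mem_ofPred_eq] <;>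
      refine ⟨?_, ?_, ?_⟩ <;> nlinarith
  | succ n ih =>
    rw [V_succ]
    rintro _ ((⟨p, hp, rfl⟩ | ⟨p, hp, rfl⟩) | ⟨p, hp, rfl⟩) <;> obtain ⟨h1, h2, h3⟩ := ih hp <;>
      simp only [Tri, F1, F2, F3, u2, u3, Set.mem_ofPred_eq, Prod.smul_fst, Prod.smul_snd,
        Prod.fst_add, Prod.snd_add, smul_eq_mul] <;>
      refine ⟨?_, ?_, ?_⟩ <;> nlinarith

-- Two of the three half-size triangles meet only in their common corner.
lemma junction_F1_F2 {x : Pt} (h1 : F1inv x ∈ Tri) (h2 : F2inv x ∈ Tri) :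
    F1inv x = u2 ∧ F2inv x = u1 := by
  have hs : 0 < √3 := by positivity
  obtain ⟨a1, a2, a3⟩ := h1
  obtain ⟨b1, b2, b3⟩ := h2
  simp only [F1inv, F2inv, u1, u2, Prod.smul_fst, Prod.smul_snd, Prod.fst_sub, Prod.snd_sub,
    smul_eq_mul, Prod.ext_iff] at a1 a2 a3 b1 b2 b3 ⊢
  have hx2 : x.2 = √3 / 4 := by nlinarith
  have hx1 : x.1 = 1 / 4 := by nlinarith
  refine ⟨⟨?_, ?_⟩, ?_, ?_⟩ <;> simp only [hx1, hx2] <;> ring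

lemma junction_F1_F3 {x : Pt} (h1 : F1inv x ∈ Tri) (h3 : F3inv x ∈ Tri) :
    F1inv x = u3 ∧ F3inv x = u1 := by
  have hs : 0 < √3 := by positivity
  obtain ⟨a1, a2, a3⟩ := h1
  obtain ⟨b1, b2, b3⟩ := h3
  simp only [F1inv, F3inv, u1, u3, Prod.smul_fst, Prod.smul_snd, Prod.fst_sub, Prod.snd_sub,
    smul_eq_mul, Prod.ext_iff] at a1 a2 a3 b1 b2 b3 ⊢
  have hx2 : x.2 = 0 := by nlinarith
  have hx1 : x.1 = 1 / 2 := by nlinarith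
  refine ⟨⟨?_, ?_⟩, ?_, ?_⟩ <;> simp only [hx1, hx2] <;> ring

lemma junction_F2_F3 {x : Pt} (h2 : F2inv x ∈ Tri) (h3 : F3inv x ∈ Tri) :
    F2inv x = u3 ∧ F3inv x = u2 := by
  have hs : 0 < √3 := by positivity
  obtain ⟨a1, a2, a3⟩ := h2
  obtain ⟨b1, b2, b3⟩ := h3
  simp only [F2inv, F3inv, u2, u3, Prod.smul_fst, Prod.smul_snd, Prod.fst_sub, Prod.snd_sub,
    smul_eq_mul, Prod.ext_iff] at a1 a2 a3 b1 b2 b3 ⊢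
  have hx2 : x.2 = √3 / 4 := by nlinarith
  have hx1 : x.1 = 3 / 4 := by nlinarith
  refine ⟨⟨?_, ?_⟩, ?_, ?_⟩ <;> simp only [hx1, hx2] <;> ring

lemma SG_zero_degree_le_two (x : Pt) : (SG 0).degree x ≤ 2 := by
  by_cases hx : x ∈ V 0
  · have hsub : (SG 0).neighborSet x ⊆ V 0 \ {x} :=
      fun y hy => ⟨(SG_adj_mem_V hy).2,
        fun h => (SG 0).ne_of_adj hy (Set.mem_singleton_iff.1 h).symm⟩
    have hcard : (V 0).ncard ≤ 3 := (Set.ncard_insert_le _ _).trans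
      (Nat.succ_le_succ ((Set.ncard_insert_le _ _).trans (by simp)))
    rw [SG_degree_eq_ncard]
    calc _ ≤ (V 0 \ {x}).ncard := Set.ncard_le_ncard hsub (V_finite 0).sdiff
      _ = (V 0).ncard - 1 := Set.ncard_sdiff_singleton_of_mem hx
      _ ≤ 2 := by omega
  · simp [SG_degree_eq_zero_of_notMem hx]

lemma SG_degree_corner_le_two (n : ℕ) : ∀ c ∈ corners, (SG n).degree c ≤ 2 := by
  induction n with
  | zero => exact fun c _ => SG_zero_degree_le_two c
  | succ n ih =>
    have hT : ∀ {y}, y ∈ V n → y ∈ Tri := fun hy => V_subset_Tri n hy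
    have h0 : ∀ {y}, y ∉ V n → (SG n).degree y = 0 := SG_degree_eq_zero_of_notMem
    have hu1 : F1inv u1 = u1 := by simp [F1inv, u1]
    have hu2 : F2inv u2 = u2 := by simp [F2inv, two_smul]
    have hu3 : F3inv u3 = u3 := by simp [F3inv, two_smul]
    have hV1 : F1inv u1 ∈ V n := by rw [hu1]; exact corners_subset_V n (Or.inl rfl)
    have hV2 : F2inv u2 ∈ V n := by rw [hu2]; exact corners_subset_V n (Or.inr (Or.inl rfl))
    have hV3 : F3inv u3 ∈ V n := by rw [hu3]; exact corners_subset_V n (Or.inr (Or.inr rfl))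
    rintro _ (rfl | rfl | rfl) <;> refine (SG_degree_succ_le n _).trans ?_
    · have h2 : F2inv u1 ∉ V n := fun h => u1_ne_u2 (hu1 ▸ (junction_F1_F2 (hT hV1) (hT h)).1)
      have h3 : F3inv u1 ∉ V n := fun h => u1_ne_u3 (hu1 ▸ (junction_F1_F3 (hT hV1) (hT h)).1)
      rw [h0 h2, h0 h3, hu1, add_zero, add_zero]
      exact ih u1 (Or.inl rfl)
    · have h1 : F1inv u2 ∉ V n := fun h => u1_ne_u2 (hu2 ▸ (junction_F1_F2 (hT h) (hT hV2)).2).symm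
      have h3 : F3inv u2 ∉ V n := fun h => u2_ne_u3 (hu2 ▸ (junction_F2_F3 (hT hV2) (hT h)).1)
      rw [h0 h1, h0 h3, hu2, zero_add, add_zero]
      exact ih u2 (Or.inr (Or.inl rfl))
    · have h1 : F1inv u3 ∉ V n := fun h => u1_ne_u3 (hu3 ▸ (junction_F1_F3 (hT h) (hT hV3)).2).symm
      have h2 : F2inv u3 ∉ V n := fun h => u2_ne_u3 (hu3 ▸ (junction_F2_F3 (hT h) (hT hV3)).2).symm
      rw [h0 h1, h0 h2, hu3, zero_add, zero_add]
      exact ih u3 (Or.inr (Or.inr rfl))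

lemma SG_degree_le_four (n : ℕ) (x : Pt) : (SG n).degree x ≤ 4 := by
  induction n generalizing x with
  | zero => exact (SG_zero_degree_le_two x).trans (by norm_num)
  | succ n ih =>
    have hle := SG_degree_succ_le n x
    have hc1 := SG_degree_corner_le_two n u1 (Or.inl rfl)
    have hc2 := SG_degree_corner_le_two n u2 (Or.inr (Or.inl rfl))
    have hc3 := SG_degree_corner_le_two n u3 (Or.inr (Or.inr rfl))
    have hT : ∀ {y}, y ∈ V n → y ∈ Tri := fun hy => V_subset_Tri n hy
    have h0 : ∀ {y}, y ∉ V n → (SG n).degree y = 0 := SG_degree_eq_zero_of_notMem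
    -- `x` lies in at most two cells, and in two only as a corner of both.
    by_cases h1 : F1inv x ∈ V n <;> by_cases h2 : F2inv x ∈ V n <;>
      by_cases h3 : F3inv x ∈ V n
    · exact absurd ((junction_F1_F2 (hT h1) (hT h2)).1.symm.trans
        (junction_F1_F3 (hT h1) (hT h3)).1) u2_ne_u3
    · obtain ⟨e1, e2⟩ := junction_F1_F2 (hT h1) (hT h2)
      rw [e1, e2, h0 h3] at hle; omega
    · obtain ⟨e1, e3⟩ := junction_F1_F3 (hT h1) (hT h3)
      rw [e1, e3, h0 h2] at hle; omega
    · rw [h0 h2, h0 h3] at hle; linarith [ih (F1inv x)]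
    · obtain ⟨e2, e3⟩ := junction_F2_F3 (hT h2) (hT h3)
      rw [e2, e3, h0 h1] at hle; omega
    · rw [h0 h1, h0 h3] at hle; linarith [ih (F2inv x)]
    · rw [h0 h1, h0 h2] at hle; linarith [ih (F3inv x)]
    · rw [h0 h1, h0 h2, h0 h3] at hle; omega

lemma lap_eq_sum (n : ℕ) (f : Pt → ℝ) (x : Pt) :
    lap n f x = 4 * f x - ∑ y ∈ (SG n).neighborFinset x, f y := by
  rw [lap]
  congr 1
  exact finsum_mem_eq_toFinset_sum f ((SG n).neighborSet x)

lemma lap_neg (n : ℕ) (f : Pt → ℝ) (x : Pt) : lap n (fun y => -f y) x = -lap n f x := by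
  simp only [lap_eq_sum, Finset.sum_neg_distrib]
  ring

def superlevel (n : ℕ) (u : Pt → ℝ) (t : ℝ) : Finset Pt := {a ∈ (V_finite n).toFinset | t < u a}

lemma mem_superlevel {n : ℕ} {u : Pt → ℝ} {t : ℝ} {a : Pt} :
    a ∈ superlevel n u t ↔ a ∈ V n ∧ t < u a := by
  simp [superlevel]

lemma notMem_corners_of_mem_superlevel {n : ℕ} {u : Pt → ℝ} {t : ℝ} (hu : ∀ c ∈ corners, u c = 0)
    (ht : 0 ≤ t) : ∀ a ∈ superlevel n u t, a ∉ corners := fun a ha hc => by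
  have := (mem_superlevel.1 ha).2
  rw [hu a hc] at this
  linarith

lemma sub_le_sum_lap_superlevel (n : ℕ) (u : Pt → ℝ) {t : ℝ} (ht : 0 ≤ t) {x y : Pt}
    (hxy : (SG n).Adj x y) (hyt : u y ≤ t) (htx : t < u x) :
    u x - u y ≤ ∑ a ∈ superlevel n u t, lap n u a := by
  simp only [lap_eq_sum]
  refine (SG n).sub_le_sum_laplacian_of_boundary_le 4 _ u (fun a _ => SG_degree_le_four n a)
    (fun a ha => ht.trans (mem_superlevel.1 ha).2.le) (fun a ha w haw hw => ?_)
    (mem_superlevel.2 ⟨(SG_adj_mem_V hxy).1, htx⟩) (fun hy => (mem_superlevel.1 hy).2.not_ge hyt)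
    hxy
  have hwt : u w ≤ t := not_lt.1 fun h => hw (mem_superlevel.2 ⟨(SG_adj_mem_V haw).2, h⟩)
  exact hwt.trans (mem_superlevel.1 ha).2.le

namespace IsGreen

variable {n : ℕ} {g : Pt → Pt → ℝ}

lemma sum_lap (hg : IsGreen n g) {z : Pt} (hz : z ∈ V n) (hzc : z ∉ corners) (A : Finset Pt)
    (hAV : ∀ a ∈ A, a ∈ V n) (hAc : ∀ a ∈ A, a ∉ corners) :
    ∑ a ∈ A, lap n (fun w => g w z) a = if z ∈ A then 1 else 0 := by
  rw [Finset.sum_congr rfl fun a ha => hg.2 z hz hzc a (hAV a ha) (hAc a ha)]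
  exact Finset.sum_ite_eq' A z fun _ => 1

lemma nonneg (hg : IsGreen n g) {x z : Pt} (hx : x ∈ V n) (hz : z ∈ V n) : 0 ≤ g x z := by
  by_cases hzc : z ∈ corners
  · exact (hg.1 x z (Or.inr hzc)).ge
  by_contra! hneg
  -- A walk from `x` to the corner `u1` leaves `{g · z < 0}` along some edge `d`.
  obtain ⟨walk⟩ := SG_reachable_u1 n x hx
  obtain ⟨d, -, hd1, hd2⟩ := walk.exists_boundary_dart {a | g a z < 0} hneg
    (by simp [hg.1 u1 z (Or.inl (Or.inl rfl))])
  have hfst : g d.fst z < 0 := hd1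
  have hsnd : 0 ≤ g d.snd z := not_lt.1 hd2
  set v : Pt → ℝ := fun w => -g w z
  have hv : ∀ c ∈ corners, v c = 0 := fun c hc => by simp [v, hg.1 c z (Or.inl hc)]
  have hcut := sub_le_sum_lap_superlevel n v le_rfl d.adj (neg_nonpos.2 hsnd) (neg_pos.2 hfst)
  have hsum : ∑ a ∈ superlevel n v 0, lap n v a ≤ 0 := by
    simp only [v, lap_neg, Finset.sum_neg_distrib, hg.sum_lap hz hzc _
      (fun a ha => (mem_superlevel.1 ha).1) (notMem_corners_of_mem_superlevel hv le_rfl)]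
    split_ifs <;> norm_num
  simp only [v] at hcut
  linarith

lemma sub_le_one (hg : IsGreen n g) {x y z : Pt} (hz : z ∈ V n) (hxy : (SG n).Adj x y) :
    g x z - g y z ≤ 1 := by
  by_cases hzc : z ∈ corners
  · simp [hg.1 x z (Or.inr hzc), hg.1 y z (Or.inr hzc)]
  rcases le_or_gt (g x z) (g y z) with hle | hlt
  · linarith
  have hu : ∀ c ∈ corners, g c z = 0 := fun c hc => hg.1 c z (Or.inl hc)
  have hy0 : 0 ≤ g y z := hg.nonneg (SG_adj_mem_V hxy).2 hz
  calc g x z - g y z ≤ ∑ a ∈ superlevel n (fun w => g w z) (g y z), lap n (fun w => g w z) a :=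
        sub_le_sum_lap_superlevel n (fun w => g w z) hy0 hxy le_rfl hlt
    _ = if z ∈ superlevel n (fun w => g w z) (g y z) then 1 else 0 :=
        hg.sum_lap hz hzc _ (fun a ha => (mem_superlevel.1 ha).1)
          (notMem_corners_of_mem_superlevel hu hy0)
    _ ≤ 1 := by split_ifs <;> norm_num

end IsGreen

/-- There is a constant `c > 0` bounding, uniformly over all levels `n`, the
increment of the Green function along any edge: for `x ∼_n y` and any `z ∈ V_{SG_n}`,
`|g_n(x,z) − g_n(y,z)| ≤ c`. -/
theorem green_edge_increment_uniformly_bounded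
    (g : ℕ → Pt → Pt → ℝ) (hg : ∀ n, IsGreen n (g n)) :
    ∃ c : ℝ, 0 < c ∧ ∀ n : ℕ, ∀ x ∈ V n, ∀ y ∈ V n, ∀ z ∈ V n,
      (SG n).Adj x y → |g n x z - g n y z| ≤ c :=
  ⟨1, one_pos, fun n _ _ _ _ _ hz hxy =>
    abs_sub_le_iff.2 ⟨(hg n).sub_le_one hz hxy, (hg n).sub_le_one hz hxy.symm⟩⟩
end
end

section
/- For every n and all x,y ∈ V_{SG_n} (so that also x,y ∈ V_{SG_{n+1}}), the graph distances satisfy d_{SG_{n+1}}(x,y) = 2·d_{SG_n}(x,y). -/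
open scoped Classical BigOperators ENNReal

noncomputable section

/-!
Every edge of `SG_n` is split by its midpoint into two edges of `SG_{n+1}`, so walks double in
length and `d_{n+1} ≤ 2 d_n`.

Conversely, every vertex of `SG_{n+1}` is `(a + b) / 2` where either `a = b` is a vertex or `ab` is
an edge of `SG_n`, and the pair `{a, b}` is unique: in lattice coordinates of mesh `2⁻⁽ⁿ⁺¹⁾` a
midpoint has an odd coordinate, and the parities determine the direction of the edge. Every edge
of `SG_{n+1}` joins `(a + b) / 2` to `(a + c) / 2` with `b ∼_n c`. Hence the potential
`(a + b) / 2 ↦ d_n(x, a) + d_n(x, b)` changes by at most one along the edges of `SG_{n+1}`, while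
it equals `2 d_n(x, ·)` on `V_n`; this gives `d_{n+1} ≥ 2 d_n`.
-/

open SimpleGraph

section Midpoint

variable {E : Type*} [AddCommGroup E] [Module ℝ E]

lemma midpoint_midpoint_distrib (t a b : E) :
    midpoint ℝ t (midpoint ℝ a b) = midpoint ℝ (midpoint ℝ t a) (midpoint ℝ t b) := by
  simp only [midpoint_eq_smul_add, invOf_eq_inv]
  module

lemma midpoint_left_cancel {t a b : E} (h : midpoint ℝ t a = midpoint ℝ t b) : a = b := by
  simpa [eq_comm, sub_eq_zero] using (midpoint_eq_midpoint_iff_vsub_eq_vsub ℝ).1 h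

lemma inv_two_smul_add_eq_midpoint (t q : E) : (2:ℝ)⁻¹ • (t + q) = midpoint ℝ t q := by
  rw [midpoint_eq_smul_add, invOf_eq_inv]

end Midpoint

lemma inv_two_smul_eq_midpoint_u1 (q : Pt) : (2:ℝ)⁻¹ • q = midpoint ℝ u1 q := by
  rw [← inv_two_smul_add_eq_midpoint, u1, Prod.mk_zero_zero, zero_add]

lemma mem_V_succ {n : ℕ} {p : Pt} :
    p ∈ V (n + 1) ↔ ∃ t ∈ corners, ∃ q ∈ V n, p = midpoint ℝ t q := by
  constructor
  · rintro ⟨q, (hq | ⟨q, hq, rfl⟩) | ⟨q, hq, rfl⟩, rfl⟩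
    · exact ⟨u1, by simp [corners], q, hq, inv_two_smul_eq_midpoint_u1 q⟩
    · exact ⟨u2, by simp [corners], q, hq, inv_two_smul_add_eq_midpoint u2 q⟩
    · exact ⟨u3, by simp [corners], q, hq, inv_two_smul_add_eq_midpoint u3 q⟩
  · rintro ⟨t, ht, q, hq, rfl⟩
    rcases ht with rfl | rfl | rfl
    · exact ⟨q, Or.inl (Or.inl hq), inv_two_smul_eq_midpoint_u1 q⟩
    · exact ⟨_, Or.inl (Or.inr ⟨q, hq, rfl⟩), inv_two_smul_add_eq_midpoint _ q⟩
    · exact ⟨_, Or.inr ⟨q, hq, rfl⟩, inv_two_smul_add_eq_midpoint _ q⟩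

lemma mem_Ed_succ {n : ℕ} {p q : Pt} :
    (p, q) ∈ Ed (n + 1) ↔
      ∃ t ∈ corners, ∃ a b, (a, b) ∈ Ed n ∧ p = midpoint ℝ t a ∧ q = midpoint ℝ t b := by
  simp only [Ed, Set.mem_image, Set.mem_union]
  constructor
  · rintro ⟨⟨a, b⟩, (hab | ⟨⟨a', b'⟩, hab, he'⟩) | ⟨⟨a', b'⟩, hab, he'⟩, he⟩ <;>
      simp only [Prod.mk.injEq] at he <;> obtain ⟨rfl, rfl⟩ := he
    · exact ⟨u1, by simp [corners], a, b, hab, inv_two_smul_eq_midpoint_u1 a,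
        inv_two_smul_eq_midpoint_u1 b⟩
    all_goals obtain ⟨rfl, rfl⟩ := he'
    · exact ⟨u2, by simp [corners], a', b', hab, inv_two_smul_add_eq_midpoint u2 a',
        inv_two_smul_add_eq_midpoint u2 b'⟩
    · exact ⟨u3, by simp [corners], a', b', hab, inv_two_smul_add_eq_midpoint u3 a',
        inv_two_smul_add_eq_midpoint u3 b'⟩
  · rintro ⟨t, ht, a, b, hab, rfl, rfl⟩
    rcases ht with rfl | rfl | rfl
    · exact ⟨(a, b), Or.inl (Or.inl hab), Prod.ext (inv_two_smul_eq_midpoint_u1 a)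
        (inv_two_smul_eq_midpoint_u1 b)⟩
    · exact ⟨_, Or.inl (Or.inr ⟨(a, b), hab, rfl⟩), Prod.ext (inv_two_smul_add_eq_midpoint _ a)
        (inv_two_smul_add_eq_midpoint _ b)⟩
    · exact ⟨_, Or.inr ⟨(a, b), hab, rfl⟩, Prod.ext (inv_two_smul_add_eq_midpoint _ a)
        (inv_two_smul_add_eq_midpoint _ b)⟩

/-- The point `2⁻ⁿ • (i • u3 + j • u2)` of the triangular lattice of mesh `2⁻ⁿ`. -/
def latticePt (n : ℕ) (i j : ℤ) : Pt := ((i + j / 2) / 2 ^ n, j * (√3 / 2) / 2 ^ n)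

lemma latticePt_inj {n : ℕ} {i j i' j' : ℤ} :
    latticePt n i j = latticePt n i' j' ↔ i = i' ∧ j = j' := by
  refine ⟨fun h => ?_, by rintro ⟨rfl, rfl⟩; rfl⟩
  obtain ⟨h1, h2⟩ := Prod.mk.inj h
  have hj : (j : ℝ) = j' := by
    have : √3 ≠ 0 := by positivity
    field_simp at h2
    exact h2
  rw [hj] at h1
  field_simp at h1
  exact ⟨by exact_mod_cast (by linarith : (i : ℝ) = i'), by exact_mod_cast hj⟩

lemma midpoint_latticePt (n : ℕ) (i j i' j' : ℤ) :
    midpoint ℝ (latticePt n i j) (latticePt n i' j') = latticePt (n + 1) (i + i') (j + j') := by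
  rw [midpoint_eq_smul_add, invOf_eq_inv]
  ext <;> simp [latticePt, pow_succ] <;> ring

lemma latticePt_zero_eq (n : ℕ) (a b : ℤ) :
    latticePt 0 a b = latticePt n (2 ^ n * a) (2 ^ n * b) := by
  ext <;> simp [latticePt] <;> field_simp

lemma u1_eq_latticePt : u1 = latticePt 0 0 0 := by ext <;> simp [u1, latticePt]

lemma u2_eq_latticePt : u2 = latticePt 0 0 1 := by ext <;> simp [u2, latticePt]

lemma u3_eq_latticePt : u3 = latticePt 0 1 0 := by ext <;> simp [u3, latticePt]

lemma exists_latticePt_of_mem_corners {t : Pt} (ht : t ∈ corners) :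
    ∃ a b, t = latticePt 0 a b := by
  rcases ht with rfl | rfl | rfl
  exacts [⟨0, 0, u1_eq_latticePt⟩, ⟨0, 1, u2_eq_latticePt⟩, ⟨1, 0, u3_eq_latticePt⟩]

lemma exists_midpoint_corner_latticePt {t : Pt} (ht : t ∈ corners) (n : ℕ) :
    ∃ a b : ℤ, ∀ i j, midpoint ℝ t (latticePt n i j) = latticePt (n + 1) (a + i) (b + j) := by
  obtain ⟨a, b, rfl⟩ := exists_latticePt_of_mem_corners ht
  exact ⟨_, _, fun i j => by rw [latticePt_zero_eq n, midpoint_latticePt]⟩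

lemma exists_latticePt_of_mem_V {n : ℕ} {p : Pt} (hp : p ∈ V n) :
    ∃ i j, p = latticePt n i j := by
  induction n generalizing p with
  | zero => exact exists_latticePt_of_mem_corners hp
  | succ n ih =>
    obtain ⟨t, ht, q, hq, rfl⟩ := mem_V_succ.1 hp
    obtain ⟨i, j, rfl⟩ := ih hq
    obtain ⟨a, b, hab⟩ := exists_midpoint_corner_latticePt ht n
    exact ⟨_, _, hab i j⟩

/-- The three edge directions `u3`, `u2` and `u3 - u2` in lattice coordinates. -/
def IsUnitStep (di dj : ℤ) : Prop := di = 1 ∧ dj = 0 ∨ di = 0 ∧ dj = 1 ∨ di = 1 ∧ dj = -1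

lemma exists_latticePt_of_mem_Ed {n : ℕ} {p q : Pt} (h : (p, q) ∈ Ed n) :
    ∃ i j di dj, IsUnitStep di dj ∧ p = latticePt n i j ∧ q = latticePt n (i + di) (j + dj) := by
  induction n generalizing p q with
  | zero =>
    rcases h with h | h | h <;> obtain ⟨rfl, rfl⟩ := Prod.mk.inj h
    · exact ⟨0, 0, 0, 1, by simp [IsUnitStep], u1_eq_latticePt, u2_eq_latticePt⟩
    · exact ⟨0, 1, 1, -1, by simp [IsUnitStep], u2_eq_latticePt, by simpa using u3_eq_latticePt⟩
    · exact ⟨0, 0, 1, 0, by simp [IsUnitStep], u1_eq_latticePt, u3_eq_latticePt⟩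
  | succ n ih =>
    obtain ⟨t, ht, a, b, hab, rfl, rfl⟩ := mem_Ed_succ.1 h
    obtain ⟨i, j, di, dj, hd, rfl, rfl⟩ := ih hab
    obtain ⟨a, b, hmid⟩ := exists_midpoint_corner_latticePt ht n
    exact ⟨_, _, di, dj, hd, hmid i j, by rw [hmid, add_assoc, add_assoc]⟩

lemma adj_of_mem_Ed {n : ℕ} {p q : Pt} (h : (p, q) ∈ Ed n) : (SG n).Adj p q := by
  refine ⟨Or.inl h, fun hpq => ?_⟩
  obtain ⟨i, j, di, dj, hd, rfl, rfl⟩ := exists_latticePt_of_mem_Ed h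
  rw [latticePt_inj] at hpq
  unfold IsUnitStep at hd
  omega

lemma exists_latticePt_midpoint_of_mem_Ed {n : ℕ} {p q : Pt} (h : (p, q) ∈ Ed n) :
    ∃ i j di dj, IsUnitStep di dj ∧ p = latticePt n i j ∧ q = latticePt n (i + di) (j + dj) ∧
      midpoint ℝ p q = latticePt (n + 1) (2 * i + di) (2 * j + dj) := by
  obtain ⟨i, j, di, dj, hd, rfl, rfl⟩ := exists_latticePt_of_mem_Ed h
  exact ⟨i, j, di, dj, hd, rfl, rfl, by rw [midpoint_latticePt]; ring_nf⟩

lemma midpoint_not_mem_V_of_mem_Ed {n : ℕ} {p q : Pt} (h : (p, q) ∈ Ed n) :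
    midpoint ℝ p q ∉ V n := by
  intro hm
  obtain ⟨i, j, di, dj, hd, -, -, hpq⟩ := exists_latticePt_midpoint_of_mem_Ed h
  obtain ⟨i', j', hij⟩ := exists_latticePt_of_mem_V hm
  rw [hpq, ← midpoint_self ℝ (latticePt n i' j'), midpoint_latticePt, latticePt_inj] at hij
  unfold IsUnitStep at hd
  omega

lemma midpoint_not_mem_V {n : ℕ} {p q : Pt} (h : (SG n).Adj p q) : midpoint ℝ p q ∉ V n := by
  rcases h.1 with h | h
  · exact midpoint_not_mem_V_of_mem_Ed h
  · exact midpoint_comm (R := ℝ) q p ▸ midpoint_not_mem_V_of_mem_Ed h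

lemma eq_of_mem_Ed_of_midpoint_eq {n : ℕ} {p q p' q' : Pt} (h : (p, q) ∈ Ed n)
    (h' : (p', q') ∈ Ed n) (hm : midpoint ℝ p q = midpoint ℝ p' q') : p = p' ∧ q = q' := by
  obtain ⟨i, j, di, dj, hd, rfl, rfl, hpq⟩ := exists_latticePt_midpoint_of_mem_Ed h
  obtain ⟨i', j', di', dj', hd', rfl, rfl, hpq'⟩ := exists_latticePt_midpoint_of_mem_Ed h'
  rw [hpq, hpq', latticePt_inj] at hm
  unfold IsUnitStep at hd hd'
  obtain ⟨rfl, rfl⟩ : i = i' ∧ j = j' := by omega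
  obtain ⟨rfl, rfl⟩ : di = di' ∧ dj = dj' := by omega
  exact ⟨rfl, rfl⟩

lemma eq_or_eq_of_adj_of_midpoint_eq {n : ℕ} {p q p' q' : Pt} (h : (SG n).Adj p q)
    (h' : (SG n).Adj p' q') (hm : midpoint ℝ p q = midpoint ℝ p' q') :
    p' = p ∧ q' = q ∨ p' = q ∧ q' = p := by
  have hm' : midpoint ℝ q p = midpoint ℝ q' p' := by rwa [midpoint_comm, midpoint_comm q']
  rcases h.1 with e | e <;> rcases h'.1 with e' | e'
  · obtain ⟨rfl, rfl⟩ := eq_of_mem_Ed_of_midpoint_eq e e' hm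
    exact .inl ⟨rfl, rfl⟩
  · obtain ⟨rfl, rfl⟩ := eq_of_mem_Ed_of_midpoint_eq e e' (hm.trans (midpoint_comm _ _))
    exact .inr ⟨rfl, rfl⟩
  · obtain ⟨rfl, rfl⟩ := eq_of_mem_Ed_of_midpoint_eq e e' (hm'.trans (midpoint_comm _ _))
    exact .inr ⟨rfl, rfl⟩
  · obtain ⟨rfl, rfl⟩ := eq_of_mem_Ed_of_midpoint_eq e e' hm'
    exact .inl ⟨rfl, rfl⟩

lemma corners_pairwise_adj : corners.Pairwise (SG 0).Adj := by
  have h12 : (SG 0).Adj u1 u2 := adj_of_mem_Ed (by simp [Ed])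
  have h23 : (SG 0).Adj u2 u3 := adj_of_mem_Ed (by simp [Ed])
  have h13 : (SG 0).Adj u1 u3 := adj_of_mem_Ed (by simp [Ed])
  rintro a (rfl | rfl | rfl) b (rfl | rfl | rfl) hab
  all_goals first | exact absurd rfl hab | assumption | exact SimpleGraph.Adj.symm ‹_›

lemma mem_corners_of_mem_Ed_zero {a b : Pt} (h : (a, b) ∈ Ed 0) : a ∈ corners ∧ b ∈ corners := by
  rcases h with h | h | h <;> obtain ⟨rfl, rfl⟩ := Prod.mk.inj h <;> simp [corners]

lemma adj_midpoint_corner {n : ℕ} {t a b : Pt} (ht : t ∈ corners) (h : (SG n).Adj a b) :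
    (SG (n + 1)).Adj (midpoint ℝ t a) (midpoint ℝ t b) :=
  ⟨h.1.imp (fun e => mem_Ed_succ.2 ⟨t, ht, a, b, e, rfl, rfl⟩)
    (fun e => mem_Ed_succ.2 ⟨t, ht, b, a, e, rfl, rfl⟩), fun e => h.ne (midpoint_left_cancel e)⟩

lemma midpoint_mem_Ed_succ {n : ℕ} {a b : Pt} (h : (a, b) ∈ Ed n) :
    (a, midpoint ℝ a b) ∈ Ed (n + 1) ∧ (midpoint ℝ a b, b) ∈ Ed (n + 1) := by
  induction n generalizing a b with
  | zero =>
    obtain ⟨ha, hb⟩ := mem_corners_of_mem_Ed_zero h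
    exact ⟨mem_Ed_succ.2 ⟨a, ha, a, b, h, (midpoint_self ℝ a).symm, rfl⟩,
      mem_Ed_succ.2 ⟨b, hb, a, b, h, midpoint_comm _ _, (midpoint_self ℝ b).symm⟩⟩
  | succ n ih =>
    obtain ⟨t, ht, a, b, hab, rfl, rfl⟩ := mem_Ed_succ.1 h
    rw [← midpoint_midpoint_distrib]
    exact ⟨mem_Ed_succ.2 ⟨t, ht, _, _, (ih hab).1, rfl, rfl⟩,
      mem_Ed_succ.2 ⟨t, ht, _, _, (ih hab).2, rfl, rfl⟩⟩

lemma adj_midpoint {n : ℕ} {a b : Pt} (h : (SG n).Adj a b) :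
    (SG (n + 1)).Adj a (midpoint ℝ a b) ∧ (SG (n + 1)).Adj (midpoint ℝ a b) b := by
  rcases h.1 with e | e
  · exact ⟨adj_of_mem_Ed (midpoint_mem_Ed_succ e).1, adj_of_mem_Ed (midpoint_mem_Ed_succ e).2⟩
  · rw [midpoint_comm]
    exact ⟨(adj_of_mem_Ed (midpoint_mem_Ed_succ e).2).symm,
      (adj_of_mem_Ed (midpoint_mem_Ed_succ e).1).symm⟩

lemma exists_walk_succ_length_eq {n : ℕ} {p q : Pt} (w : (SG n).Walk p q) :
    ∃ w' : (SG (n + 1)).Walk p q, w'.length = 2 * w.length := by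
  induction w with
  | nil => exact ⟨.nil, rfl⟩
  | cons h _ ih =>
    obtain ⟨w', hw'⟩ := ih
    refine ⟨.cons (adj_midpoint h).1 (.cons (adj_midpoint h).2 w'), ?_⟩
    simp only [Walk.length_cons, hw']
    ring

lemma SimpleGraph.Reachable.SG_succ {n : ℕ} {p q : Pt} (h : (SG n).Reachable p q) :
    (SG (n + 1)).Reachable p q :=
  let ⟨w⟩ := h
  let ⟨w', _⟩ := exists_walk_succ_length_eq w
  ⟨w'⟩

def IsSubdivisionPoint (n : ℕ) (p a b : Pt) : Prop :=
  a ∈ V n ∧ (a = b ∨ (SG n).Adj a b) ∧ p = midpoint ℝ a b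

lemma isSubdivisionPoint_self {n : ℕ} {a : Pt} (h : a ∈ V n) : IsSubdivisionPoint n a a a :=
  ⟨h, .inl rfl, (midpoint_self ℝ a).symm⟩

lemma isSubdivisionPoint_zero {t a : Pt} (ht : t ∈ corners) (ha : a ∈ corners) :
    IsSubdivisionPoint 0 (midpoint ℝ t a) t a :=
  ⟨ht, (eq_or_ne t a).imp_right (corners_pairwise_adj ht ha), rfl⟩

lemma IsSubdivisionPoint.midpoint_corner {n : ℕ} {t p a b : Pt} (ht : t ∈ corners)
    (h : IsSubdivisionPoint n p a b) :
    IsSubdivisionPoint (n + 1) (midpoint ℝ t p) (midpoint ℝ t a) (midpoint ℝ t b) :=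
  ⟨mem_V_succ.2 ⟨t, ht, a, h.1, rfl⟩, h.2.1.imp (congrArg _) (adj_midpoint_corner ht),
    h.2.2 ▸ midpoint_midpoint_distrib t a b⟩

lemma IsSubdivisionPoint.unique {n : ℕ} {p a b a' b' : Pt} (h : IsSubdivisionPoint n p a b)
    (h' : IsSubdivisionPoint n p a' b') : a' = a ∧ b' = b ∨ a' = b ∧ b' = a := by
  obtain ⟨ha, rfl | hab, rfl⟩ := h <;> obtain ⟨ha', rfl | hab', hm⟩ := h'
  · rw [midpoint_self, midpoint_self] at hm
    exact .inl ⟨hm.symm, hm.symm⟩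
  · exact absurd (by rwa [← hm, midpoint_self]) (midpoint_not_mem_V hab')
  · exact absurd (by rwa [hm, midpoint_self]) (midpoint_not_mem_V hab)
  · exact eq_or_eq_of_adj_of_midpoint_eq hab hab' hm

lemma exists_isSubdivisionPoint_of_mem_V_succ {n : ℕ} {p : Pt} (hp : p ∈ V (n + 1)) :
    ∃ a b, IsSubdivisionPoint n p a b := by
  induction n generalizing p with
  | zero =>
    obtain ⟨t, ht, q, hq, rfl⟩ := mem_V_succ.1 hp
    exact ⟨t, q, isSubdivisionPoint_zero ht hq⟩
  | succ n ih =>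
    obtain ⟨t, ht, q, hq, rfl⟩ := mem_V_succ.1 hp
    obtain ⟨a, b, h⟩ := ih hq
    exact ⟨_, _, h.midpoint_corner ht⟩

lemma exists_isSubdivisionPoint_of_mem_Ed_succ {n : ℕ} {p q : Pt} (h : (p, q) ∈ Ed (n + 1)) :
    ∃ x y z, IsSubdivisionPoint n p x y ∧ IsSubdivisionPoint n q x z ∧ (SG n).Adj y z := by
  induction n generalizing p q with
  | zero =>
    obtain ⟨t, ht, a, b, hab, rfl, rfl⟩ := mem_Ed_succ.1 h
    obtain ⟨ha, hb⟩ := mem_corners_of_mem_Ed_zero hab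
    exact ⟨t, a, b, isSubdivisionPoint_zero ht ha, isSubdivisionPoint_zero ht hb,
      adj_of_mem_Ed hab⟩
  | succ n ih =>
    obtain ⟨t, ht, a, b, hab, rfl, rfl⟩ := mem_Ed_succ.1 h
    obtain ⟨x, y, z, hy, hz, hyz⟩ := ih hab
    exact ⟨_, _, _, hy.midpoint_corner ht, hz.midpoint_corner ht, adj_midpoint_corner ht hyz⟩

lemma reachable_of_mem_V {n : ℕ} {p q : Pt} (hp : p ∈ V n) (hq : q ∈ V n) :
    (SG n).Reachable p q := by
  induction n generalizing p q with
  | zero =>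
    rcases eq_or_ne p q with rfl | hpq
    · rfl
    · exact (corners_pairwise_adj hp hq hpq).reachable
  | succ n ih =>
    have reachable_from_V : ∀ p ∈ V (n + 1), ∃ a ∈ V n, (SG (n + 1)).Reachable a p := by
      intro p hp
      obtain ⟨a, b, ha, rfl | hab, rfl⟩ := exists_isSubdivisionPoint_of_mem_V_succ hp
      · exact ⟨a, ha, by rw [midpoint_self]⟩
      · exact ⟨a, ha, (adj_midpoint hab).1.reachable⟩
    obtain ⟨a, ha, hap⟩ := reachable_from_V p hp
    obtain ⟨b, hb, hbq⟩ := reachable_from_V q hq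
    exact hap.symm.trans ((ih ha hb).SG_succ.trans hbq)

def potential (n : ℕ) (x p : Pt) : ℕ :=
  if h : ∃ ab : Pt × Pt, IsSubdivisionPoint n p ab.1 ab.2 then
    gdist n x h.choose.1 + gdist n x h.choose.2
  else 0

lemma IsSubdivisionPoint.potential_eq {n : ℕ} {p a b : Pt} (h : IsSubdivisionPoint n p a b)
    (x : Pt) : potential n x p = gdist n x a + gdist n x b := by
  have hex : ∃ ab : Pt × Pt, IsSubdivisionPoint n p ab.1 ab.2 := ⟨(a, b), h⟩
  rw [potential, dif_pos hex]
  rcases h.unique hex.choose_spec with ⟨h1, h2⟩ | ⟨h1, h2⟩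
  · rw [h1, h2]
  · rw [h1, h2, add_comm]

lemma potential_le_of_adj {n : ℕ} (x : Pt) {p q : Pt} (h : (SG (n + 1)).Adj p q) :
    potential n x q ≤ potential n x p + 1 := by
  have lipschitz : ∀ {p q}, (p, q) ∈ Ed (n + 1) →
      potential n x q ≤ potential n x p + 1 ∧ potential n x p ≤ potential n x q + 1 := by
    intro p q e
    obtain ⟨a, b, c, hb, hc, hbc⟩ := exists_isSubdivisionPoint_of_mem_Ed_succ e
    rw [hb.potential_eq, hc.potential_eq]
    have := hbc.diff_dist_adj (u := x)
    unfold gdist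
    omega
  rcases h.1 with e | e
  exacts [(lipschitz e).1, (lipschitz e).2]

lemma potential_le_of_walk {n : ℕ} (x : Pt) {p q : Pt} (w : (SG (n + 1)).Walk p q) :
    potential n x q ≤ potential n x p + w.length := by
  induction w with
  | nil => simp
  | cons h _ ih =>
    have := potential_le_of_adj x h
    rw [Walk.length_cons]
    omega

/-- For every `n` and all `x, y ∈ V_{SG_n}`, the graph distances satisfy
`d_{SG_{n+1}}(x,y) = 2·d_{SG_n}(x,y)`. -/
theorem gdist_doubling (n : ℕ) :
    ∀ x ∈ V n, ∀ y ∈ V n, gdist (n + 1) x y = 2 * gdist n x y := by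
  intro x hx y hy
  have hxy := reachable_of_mem_V hx hy
  apply le_antisymm
  · obtain ⟨w, hw⟩ := hxy.exists_walk_length_eq_dist
    obtain ⟨w', hw'⟩ := exists_walk_succ_length_eq w
    calc gdist (n + 1) x y ≤ w'.length := dist_le w'
      _ = 2 * gdist n x y := by rw [hw', hw, gdist]
  · obtain ⟨w, hw⟩ := hxy.SG_succ.exists_walk_length_eq_dist
    have := potential_le_of_walk x w
    rw [(isSubdivisionPoint_self hy).potential_eq, (isSubdivisionPoint_self hx).potential_eq, hw,
      gdist, gdist, dist_self] at this
    unfold gdist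
    omega
end
end
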